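/- arXiv:1806.10493 — 4 statements merged into one kernel-verified Lean document; each statement's English description precedes it below -/
import Mathlib

section
/- Let μ and ν be Borel probability measures on ℝ with finite second moment. Then W₂²(μ,ν) = ∫₀¹ (F_μ⁻¹(t) − F_ν⁻¹(t))² dt; that is, the infimum of ∫ (x−y)² dπ(x,y) over all couplings π of μ and ν is attained and equals the squared L² distance between the quantile functions (equivalently, the coupling given by the joint law of (F_μ⁻¹(U), F_ν⁻¹(U)) for U uniform on (0,1) is optimal). -/
open MeasureTheory
open scoped ENNReal

/-- The quantile function `F_μ⁻¹(t) = inf {x : ℝ | F_μ(x) ≥ t}` of a probability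
measure `μ` on `ℝ`, where `F_μ(x) = μ((-∞, x])` is the cumulative distribution
function. -/
noncomputable def quantile (μ : Measure ℝ) (t : ℝ) : ℝ :=
  sInf {x : ℝ | t ≤ (μ (Set.Iic x)).toReal}

/-- `π` is a coupling of `μ` and `ν`: a probability measure on `ℝ × ℝ` whose first
marginal is `μ` and whose second marginal is `ν`. -/
def IsCoupling (π : Measure (ℝ × ℝ)) (μ ν : Measure ℝ) : Prop :=
  IsProbabilityMeasure π ∧ π.map Prod.fst = μ ∧ π.map Prod.snd = ν

/-- The squared Wasserstein distance `W₂²(μ,ν)`: the infimum over all couplings `π`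
of `μ` and `ν` of the transport cost `∫ (x-y)² dπ(x,y)`. -/
noncomputable def W2sq (μ ν : Measure ℝ) : ℝ≥0∞ :=
  sInf {I : ℝ≥0∞ | ∃ π : Measure (ℝ × ℝ), IsCoupling π μ ν ∧
    I = ∫⁻ p, ENNReal.ofReal ((p.1 - p.2) ^ 2) ∂π}

/-!
Say that `(x, y)` straddles `(s, t]`, for `s < t`, if one coordinate is `≤ s` and the other `> t`.
For fixed `(x, y)` these `(s, t)` form a triangle of area `(x - y)² / 2`, so by Tonelli the cost
of a coupling `π` of `μ` and `ν` is `2 ∫_{s<t} (π(X ≤ s, Y > t) + π(Y ≤ s, X > t)) ds dt`.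
Each quadrant mass is at least its Fréchet lower bound `(F_μ(s) - F_ν(t))⁺`, and the quantile
coupling `(F_μ⁻¹(U), F_ν⁻¹(U))` attains it: `F_μ⁻¹(U) ≤ s ↔ U ≤ F_μ(s)`, so the events
`{F_μ⁻¹(U) ≤ s}` and `{F_ν⁻¹(U) ≤ t}` are nested initial segments of `(0, 1)`.
-/

open Set Filter ProbabilityTheory

section Quantile

variable (μ : Measure ℝ) {t : ℝ}

lemma nonempty_setOf_le_cdf (ht : t < 1) : {x | t ≤ cdf μ x}.Nonempty :=
  ((tendsto_cdf_atTop μ).eventually (eventually_ge_nhds ht)).exists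

lemma bddBelow_setOf_le_cdf (ht : 0 < t) : BddBelow {x | t ≤ cdf μ x} := by
  obtain ⟨x₀, hx₀⟩ := eventually_atBot.1 ((tendsto_cdf_atBot μ).eventually (eventually_lt_nhds ht))
  exact ⟨x₀, fun y hy => le_of_not_gt fun hyx => (hx₀ y hyx.le).not_ge hy⟩

variable [IsProbabilityMeasure μ]

lemma quantile_eq_sInf_cdf (t : ℝ) : quantile μ t = sInf {x | t ≤ cdf μ x} := by
  simp only [quantile, cdf_eq_real, Measure.real]

lemma quantile_le_iff (ht : t ∈ Ioo 0 1) (x : ℝ) : quantile μ t ≤ x ↔ t ≤ cdf μ x := by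
  rw [quantile_eq_sInf_cdf]
  refine ⟨fun h => ?_, fun h => csInf_le (bddBelow_setOf_le_cdf μ ht.1) h⟩
  have hright : ∀ y, x < y → t ≤ cdf μ y := fun y hxy => by
    obtain ⟨z, hz, hzy⟩ := (csInf_lt_iff (bddBelow_setOf_le_cdf μ ht.1)
      (nonempty_setOf_le_cdf μ ht.2)).1 (h.trans_lt hxy)
    exact hz.trans (monotone_cdf μ hzy.le)
  exact ge_of_tendsto ((cdf μ).right_continuous x |>.mono Ioi_subset_Ici_self)
    (eventually_nhdsWithin_of_forall hright)

lemma monotoneOn_quantile : MonotoneOn (quantile μ) (Ioo 0 1) := fun a ha b hb hab => by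
  rw [quantile_eq_sInf_cdf, quantile_eq_sInf_cdf]
  exact csInf_le_csInf (bddBelow_setOf_le_cdf μ ha.1) (nonempty_setOf_le_cdf μ hb.2)
    fun x hx => hab.trans hx

lemma aemeasurable_quantile : AEMeasurable (quantile μ) (volume.restrict (Ioo 0 1)) :=
  aemeasurable_restrict_of_monotoneOn measurableSet_Ioo (monotoneOn_quantile μ)

end Quantile

instance : IsProbabilityMeasure (volume.restrict (Ioo (0 : ℝ) 1)) :=
  ⟨by simp [Real.volume_Ioo]⟩

lemma volume_Ioo_zero_one_inter_Ioc {a b : ℝ} (ha : 0 ≤ a) (hb : b ≤ 1) :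
    volume (Ioo 0 1 ∩ Ioc a b) = ENNReal.ofReal (b - a) := by
  rw [measure_congr ((Ioo_ae_eq_Ioc (μ := volume)).inter (ae_eq_refl (Ioc a b))), Ioc_inter_Ioc,
    max_eq_right ha, min_eq_right hb, Real.volume_Ioc]

section UniformLaw

variable (μ ν : Measure ℝ) [IsProbabilityMeasure μ] [IsProbabilityMeasure ν]

lemma map_quantile : (volume.restrict (Ioo 0 1)).map (quantile μ) = μ := by
  refine Measure.ext_of_Iic _ _ fun x => ?_
  have hset : quantile μ ⁻¹' Iic x ∩ Ioo 0 1 = Ioo 0 1 ∩ Ioc 0 (cdf μ x) := by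
    ext u
    simp only [mem_inter_iff, mem_preimage, mem_Iic, mem_Ioo, mem_Ioc]
    constructor
    · rintro ⟨h, hu⟩; exact ⟨hu, hu.1, (quantile_le_iff μ hu x).1 h⟩
    · rintro ⟨hu, -, h⟩; exact ⟨(quantile_le_iff μ hu x).2 h, hu⟩
  rw [Measure.map_apply_of_aemeasurable (aemeasurable_quantile μ) measurableSet_Iic,
    Measure.restrict_apply' measurableSet_Ioo, hset,
    volume_Ioo_zero_one_inter_Ioc le_rfl (cdf_le_one μ x), sub_zero, ofReal_cdf]

lemma restrict_Ioo_setOf_quantile_le_lt (s t : ℝ) :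
    volume.restrict (Ioo 0 1) {u | quantile μ u ≤ s ∧ t < quantile ν u}
      = μ (Iic s) - ν (Iic t) := by
  have hset : {u | quantile μ u ≤ s ∧ t < quantile ν u} ∩ Ioo 0 1
      = Ioo 0 1 ∩ Ioc (cdf ν t) (cdf μ s) := by
    ext u
    simp only [mem_inter_iff, mem_ofPred_eq, mem_Ioc, ← not_le]
    constructor
    · rintro ⟨⟨hs, ht⟩, hu⟩
      exact ⟨hu, mt (quantile_le_iff ν hu t).2 ht, (quantile_le_iff μ hu s).1 hs⟩
    · rintro ⟨hu, ht, hs⟩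
      exact ⟨⟨(quantile_le_iff μ hu s).2 hs, mt (quantile_le_iff ν hu t).1 ht⟩, hu⟩
  rw [Measure.restrict_apply' measurableSet_Ioo, hset,
    volume_Ioo_zero_one_inter_Ioc (cdf_nonneg ν t) (cdf_le_one μ s),
    ENNReal.ofReal_sub _ (cdf_nonneg ν t), ofReal_cdf, ofReal_cdf]

end UniformLaw

section FrechetBounds

variable {α β : Type*} [MeasurableSpace α] [MeasurableSpace β]
  {π : Measure (α × β)} {μ : Measure α} {ν : Measure β}
  {A : Set α} {B : Set β}

lemma tsub_le_measure_prod_compl (h₁ : π.map Prod.fst = μ) (h₂ : π.map Prod.snd = ν)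
    (hA : MeasurableSet A) (hB : MeasurableSet B) : μ A - ν B ≤ π (A ×ˢ Bᶜ) := by
  subst h₁ h₂
  rw [Measure.map_apply measurable_fst hA, Measure.map_apply measurable_snd hB]
  exact le_measure_sdiff.trans_eq (congrArg π (by ext; simp))

lemma tsub_le_measure_compl_prod (h₁ : π.map Prod.fst = μ) (h₂ : π.map Prod.snd = ν)
    (hA : MeasurableSet A) (hB : MeasurableSet B) : ν B - μ A ≤ π (Aᶜ ×ˢ B) := by
  subst h₁ h₂
  rw [Measure.map_apply measurable_fst hA, Measure.map_apply measurable_snd hB]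
  exact le_measure_sdiff.trans_eq (congrArg π (by ext; simp [and_comm]))

end FrechetBounds

lemma volume_setOf_le_lt_lt {a b : ℝ} (hab : a ≤ b) :
    volume {q : ℝ × ℝ | a ≤ q.1 ∧ q.1 < q.2 ∧ q.2 < b} = ENNReal.ofReal ((b - a) ^ 2 / 2) := by
  have hregion : {q : ℝ × ℝ | a ≤ q.1 ∧ q.1 < q.2 ∧ q.2 < b}
      = regionBetween id (fun _ => b) (Icc a b) := by
    ext q
    simp only [regionBetween, mem_ofPred_eq, mem_Icc, mem_Ioo, id]
    constructor
    · rintro ⟨h1, h2, h3⟩; exact ⟨⟨h1, by linarith⟩, h2, h3⟩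
    · rintro ⟨⟨h1, -⟩, h2, h3⟩; exact ⟨h1, h2, h3⟩
  rw [hregion, Measure.volume_eq_prod, volume_regionBetween_eq_integral
    continuous_id.integrableOn_Icc continuous_const.integrableOn_Icc measurableSet_Icc
    fun x hx => hx.2, integral_Icc_eq_integral_Ioc, ← intervalIntegral.integral_of_le hab]
  congr 1
  simp only [Pi.sub_apply, id]
  rw [intervalIntegral.integral_comp_sub_left (fun x => x), integral_id]
  ring

def straddle (q : ℝ × ℝ) : Set (ℝ × ℝ) :=
  {p | q.1 < q.2 ∧ (p.1 ≤ q.1 ∧ q.2 < p.2 ∨ p.2 ≤ q.1 ∧ q.2 < p.1)}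

lemma straddle_eq_union {q : ℝ × ℝ} (h : q.1 < q.2) :
    straddle q = Iic q.1 ×ˢ Ioi q.2 ∪ Ioi q.2 ×ˢ Iic q.1 := by
  ext p
  simp [straddle, h, and_comm]

lemma straddle_eq_empty {q : ℝ × ℝ} (h : q.2 ≤ q.1) : straddle q = ∅ :=
  eq_empty_of_forall_notMem fun _ hp => hp.1.not_ge h

lemma setOf_mem_straddle (p : ℝ × ℝ) :
    {q | p ∈ straddle q} = {q | min p.1 p.2 ≤ q.1 ∧ q.1 < q.2 ∧ q.2 < max p.1 p.2} := by
  ext q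
  simp only [straddle, mem_ofPred_eq, min_le_iff, lt_max_iff]
  constructor
  · rintro ⟨h, ⟨h1, h2⟩ | ⟨h1, h2⟩⟩ <;> tauto
  · rintro ⟨h1 | h1, h, h2 | h2⟩ <;> first | tauto | (exfalso; linarith)

lemma measurableSet_setOf_mem_straddle :
    MeasurableSet {z : (ℝ × ℝ) × (ℝ × ℝ) | z.1 ∈ straddle z.2} := by
  simp only [straddle, mem_ofPred_eq]
  measurability

lemma ofReal_sq_sub_eq_two_mul_volume (p : ℝ × ℝ) :
    ENNReal.ofReal ((p.1 - p.2) ^ 2) = 2 * volume {q | p ∈ straddle q} := by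
  rw [setOf_mem_straddle, volume_setOf_le_lt_lt min_le_max, ← ENNReal.ofReal_ofNat 2,
    ← ENNReal.ofReal_mul zero_le_two, max_sub_min_eq_abs', sq_abs]
  ring_nf

lemma lintegral_sq_sub_eq_lintegral_straddle (π : Measure (ℝ × ℝ)) [SFinite π] :
    ∫⁻ p, ENNReal.ofReal ((p.1 - p.2) ^ 2) ∂π = 2 * ∫⁻ q, π (straddle q) := by
  simp_rw [ofReal_sq_sub_eq_two_mul_volume]
  rw [lintegral_const_mul' _ _ ENNReal.ofNat_ne_top]
  congr 1
  exact (Measure.prod_apply measurableSet_setOf_mem_straddle).symm.trans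
    (Measure.prod_apply_symm measurableSet_setOf_mem_straddle)

lemma ofReal_sq_sub_le (a b : ℝ) :
    ENNReal.ofReal ((a - b) ^ 2) ≤ 2 * ENNReal.ofReal (a ^ 2) + 2 * ENNReal.ofReal (b ^ 2) := by
  rw [← ENNReal.ofReal_ofNat 2, ← ENNReal.ofReal_mul zero_le_two, ← ENNReal.ofReal_mul zero_le_two,
    ← ENNReal.ofReal_add (by positivity) (by positivity)]
  exact ENNReal.ofReal_le_ofReal (by nlinarith [sq_nonneg (a + b)])

lemma lintegral_sq_sub_le {π : Measure (ℝ × ℝ)} {μ ν : Measure ℝ}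
    (h₁ : π.map Prod.fst = μ) (h₂ : π.map Prod.snd = ν) :
    ∫⁻ p, ENNReal.ofReal ((p.1 - p.2) ^ 2) ∂π
      ≤ 2 * ∫⁻ x, ENNReal.ofReal (x ^ 2) ∂μ + 2 * ∫⁻ y, ENNReal.ofReal (y ^ 2) ∂ν := by
  subst h₁ h₂
  rw [lintegral_map (by fun_prop) measurable_fst, lintegral_map (by fun_prop) measurable_snd,
    ← lintegral_const_mul _ (by fun_prop), ← lintegral_const_mul _ (by fun_prop),
    ← lintegral_add_left (by fun_prop)]
  exact lintegral_mono fun p => ofReal_sq_sub_le p.1 p.2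

noncomputable def quantileCoupling (μ ν : Measure ℝ) : Measure (ℝ × ℝ) :=
  (volume.restrict (Ioo 0 1)).map fun u => (quantile μ u, quantile ν u)

section QuantileCoupling

variable (μ ν : Measure ℝ) [IsProbabilityMeasure μ] [IsProbabilityMeasure ν]

lemma aemeasurable_quantile_prodMk :
    AEMeasurable (fun u => (quantile μ u, quantile ν u)) (volume.restrict (Ioo 0 1)) :=
  (aemeasurable_quantile μ).prodMk (aemeasurable_quantile ν)

lemma isCoupling_quantileCoupling : IsCoupling (quantileCoupling μ ν) μ ν := by
  refine ⟨Measure.isProbabilityMeasure_map (aemeasurable_quantile_prodMk μ ν), ?_, ?_⟩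
  · rw [quantileCoupling, AEMeasurable.map_map_of_aemeasurable measurable_fst.aemeasurable
      (aemeasurable_quantile_prodMk μ ν)]
    exact map_quantile μ
  · rw [quantileCoupling, AEMeasurable.map_map_of_aemeasurable measurable_snd.aemeasurable
      (aemeasurable_quantile_prodMk μ ν)]
    exact map_quantile ν

lemma quantileCoupling_Iic_prod_Ioi (s t : ℝ) :
    quantileCoupling μ ν (Iic s ×ˢ Ioi t) = μ (Iic s) - ν (Iic t) := by
  rw [quantileCoupling, Measure.map_apply_of_aemeasurable (aemeasurable_quantile_prodMk μ ν)
    (measurableSet_Iic.prod measurableSet_Ioi)]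
  exact restrict_Ioo_setOf_quantile_le_lt μ ν s t

lemma quantileCoupling_Ioi_prod_Iic (s t : ℝ) :
    quantileCoupling μ ν (Ioi t ×ˢ Iic s) = ν (Iic s) - μ (Iic t) := by
  rw [quantileCoupling, Measure.map_apply_of_aemeasurable (aemeasurable_quantile_prodMk μ ν)
    (measurableSet_Ioi.prod measurableSet_Iic), ← restrict_Ioo_setOf_quantile_le_lt ν μ s t]
  congr 1
  exact Set.ext fun _ => and_comm

lemma quantileCoupling_straddle_le {π : Measure (ℝ × ℝ)}
    (h₁ : π.map Prod.fst = μ) (h₂ : π.map Prod.snd = ν) (q : ℝ × ℝ) :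
    quantileCoupling μ ν (straddle q) ≤ π (straddle q) := by
  obtain hq | hq := lt_or_ge q.1 q.2
  · have hdisj : Disjoint (Iic q.1 ×ˢ Ioi q.2) (Ioi q.2 ×ˢ Iic q.1) :=
      disjoint_left.2 fun p hp hp' => (hp.1.trans_lt hq).not_gt hp'.1
    have hmeas : MeasurableSet (Ioi q.2 ×ˢ Iic q.1) := measurableSet_Ioi.prod measurableSet_Iic
    rw [straddle_eq_union hq, measure_union hdisj hmeas, measure_union hdisj hmeas]
    refine add_le_add ?_ ?_
    · rw [quantileCoupling_Iic_prod_Ioi, ← compl_Iic]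
      exact tsub_le_measure_prod_compl h₁ h₂ measurableSet_Iic measurableSet_Iic
    · rw [quantileCoupling_Ioi_prod_Iic, ← compl_Iic]
      exact tsub_le_measure_compl_prod h₁ h₂ measurableSet_Iic measurableSet_Iic
  · simp [straddle_eq_empty hq]

lemma lintegral_sq_sub_quantileCoupling_le {π : Measure (ℝ × ℝ)} (hπ : IsCoupling π μ ν) :
    ∫⁻ p, ENNReal.ofReal ((p.1 - p.2) ^ 2) ∂quantileCoupling μ ν
      ≤ ∫⁻ p, ENNReal.ofReal ((p.1 - p.2) ^ 2) ∂π := by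
  obtain ⟨_, h₁, h₂⟩ := hπ
  have := (isCoupling_quantileCoupling μ ν).1
  rw [lintegral_sq_sub_eq_lintegral_straddle, lintegral_sq_sub_eq_lintegral_straddle]
  gcongr 2 * ?_
  exact lintegral_mono (quantileCoupling_straddle_le μ ν h₁ h₂)

lemma lintegral_sq_sub_quantileCoupling :
    ∫⁻ p, ENNReal.ofReal ((p.1 - p.2) ^ 2) ∂quantileCoupling μ ν
      = ∫⁻ u in Ioo 0 1, ENNReal.ofReal ((quantile μ u - quantile ν u) ^ 2) :=
  lintegral_map' (by fun_prop) (aemeasurable_quantile_prodMk μ ν)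

end QuantileCoupling

/-- For Borel probability measures `μ, ν` on `ℝ` with finite second moments,
`W₂²(μ,ν) = ∫₀¹ (F_μ⁻¹(t) − F_ν⁻¹(t))² dt`, and the infimum defining `W₂²` is
attained by some coupling (the joint law of the quantile functions of a uniform
variable is an optimal coupling). -/
theorem W2sq_eq_integral_quantile (μ ν : Measure ℝ)
    [IsProbabilityMeasure μ] [IsProbabilityMeasure ν]
    (hμ : ∫⁻ x, ENNReal.ofReal (x ^ 2) ∂μ < ⊤)
    (hν : ∫⁻ x, ENNReal.ofReal (x ^ 2) ∂ν < ⊤) :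
    W2sq μ ν = ENNReal.ofReal (∫ t in Set.Ioo (0 : ℝ) 1,
        (quantile μ t - quantile ν t) ^ 2) ∧
    ∃ π : Measure (ℝ × ℝ), IsCoupling π μ ν ∧
      ∫⁻ p, ENNReal.ofReal ((p.1 - p.2) ^ 2) ∂π = W2sq μ ν := by
  have hπ := isCoupling_quantileCoupling μ ν
  have hW : W2sq μ ν = ∫⁻ p, ENNReal.ofReal ((p.1 - p.2) ^ 2) ∂quantileCoupling μ ν :=
    le_antisymm (sInf_le ⟨_, hπ, rfl⟩)
      (le_sInf fun _ ⟨_, hπ', hI⟩ => hI ▸ lintegral_sq_sub_quantileCoupling_le μ ν hπ')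
  have hfin : ∫⁻ p, ENNReal.ofReal ((p.1 - p.2) ^ 2) ∂quantileCoupling μ ν ≠ ⊤ :=
    ((lintegral_sq_sub_le hπ.2.1 hπ.2.2).trans_lt (by finiteness)).ne
  have hmeas : AEStronglyMeasurable (fun t => (quantile μ t - quantile ν t) ^ 2)
      (volume.restrict (Ioo 0 1)) :=
    (((aemeasurable_quantile μ).sub (aemeasurable_quantile ν)).pow_const 2).aestronglyMeasurable
  refine ⟨?_, _, hπ, hW.symm⟩
  rw [integral_eq_lintegral_of_nonneg_ae (Eventually.of_forall fun _ => sq_nonneg _) hmeas,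
    ← lintegral_sq_sub_quantileCoupling, ENNReal.ofReal_toReal hfin, hW]
end

section
/- Let X be a set and let K : X × X → ℝ be a symmetric negative definite kernel with K(x,y) ≥ 0 for all x,y and K(x,x) = 0 for all x. Then for every H with 0 < H ≤ 1, the function (x,y) ↦ K(x,y)^H is also a negative definite kernel on X. -/
/-!
Schoenberg: if `K` is negative definite, then for every `z` the kernel
`K x z + K z y - K x y - K z z` is positive semidefinite, hence so is its exponential (Schur
product theorem applied to the exponential series), and conjugating by
`exp (t (K z z / 2 - K x z))` shows that `exp (-t K)` is positive semidefinite for every `t ≥ 0`.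
For `0 < H < 1` and `s ≥ 0`, `s ^ H = C⁻¹ ∫₀^∞ (1 - exp (-u s)) u ^ (-1 - H) du` with `C > 0`,
so `K ^ H` is a positive mixture of the negative definite kernels `1 - exp (-u K)`.
-/

open MeasureTheory Set
open scoped Matrix

section

variable {X : Type*}

def IsPosSemidefKernel (K : X → X → ℝ) : Prop :=
  ∀ (n : ℕ) (x : Fin n → X) (c : Fin n → ℝ), 0 ≤ ∑ i, ∑ j, c i * c j * K (x i) (x j)

def IsNegDefKernel (K : X → X → ℝ) : Prop :=
  ∀ (n : ℕ) (x : Fin n → X) (c : Fin n → ℝ), ∑ i, c i = 0 →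
    ∑ i, ∑ j, c i * c j * K (x i) (x j) ≤ 0

lemma Matrix.dotProduct_mulVec_eq_sum_sum {ι R : Type*} [Fintype ι] [CommSemiring R]
    (A : Matrix ι ι R) (c : ι → R) : c ⬝ᵥ A *ᵥ c = ∑ i, ∑ j, c i * c j * A i j := by
  simp only [dotProduct, Matrix.mulVec, Finset.mul_sum]
  exact Finset.sum_congr rfl fun i _ => Finset.sum_congr rfl fun j _ => by ring

lemma isPosSemidefKernel_iff_posSemidef {K : X → X → ℝ} (hK : ∀ x y, K x y = K y x) :
    IsPosSemidefKernel K ↔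
      ∀ (n : ℕ) (x : Fin n → X), (Matrix.of fun i j => K (x i) (x j)).PosSemidef := by
  have hherm (n : ℕ) (x : Fin n → X) : (Matrix.of fun i j => K (x i) (x j)).IsHermitian :=
    Matrix.IsHermitian.ext fun i j => by simp [hK]
  simp only [Matrix.posSemidef_iff_dotProduct_mulVec, star_trivial,
    Matrix.dotProduct_mulVec_eq_sum_sum, Matrix.of_apply]
  exact ⟨fun h n x => ⟨hherm n x, h n x⟩, fun h n x => (h n x).2⟩

lemma isPosSemidefKernel_one : IsPosSemidefKernel fun _ _ : X => (1 : ℝ) := by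
  intro n x c
  simpa [← Finset.sum_mul_sum] using mul_self_nonneg (∑ i, c i)

namespace IsPosSemidefKernel

variable {K L : X → X → ℝ}

lemma const_mul (hK : IsPosSemidefKernel K) {t : ℝ} (ht : 0 ≤ t) :
    IsPosSemidefKernel fun x y => t * K x y := by
  intro n x c
  have hsum : ∑ i, ∑ j, c i * c j * (t * K (x i) (x j)) =
      t * ∑ i, ∑ j, c i * c j * K (x i) (x j) := by
    simp only [Finset.mul_sum]
    exact Finset.sum_congr rfl fun i _ => Finset.sum_congr rfl fun j _ => by ring
  rw [hsum]
  exact mul_nonneg ht (hK n x c)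

lemma mul_mul_same (hK : IsPosSemidefKernel K) (f : X → ℝ) :
    IsPosSemidefKernel fun x y => f x * K x y * f y := by
  intro n x c
  convert hK n x fun i => c i * f (x i) using 3 with i _ j _
  ring

lemma mul (hKs : ∀ x y, K x y = K y x) (hLs : ∀ x y, L x y = L y x)
    (hK : IsPosSemidefKernel K) (hL : IsPosSemidefKernel L) :
    IsPosSemidefKernel fun x y => K x y * L x y :=
  (isPosSemidefKernel_iff_posSemidef fun x y => by rw [hKs, hLs]).2 fun n x =>
    ((isPosSemidefKernel_iff_posSemidef hKs).1 hK n x).hadamard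
      ((isPosSemidefKernel_iff_posSemidef hLs).1 hL n x)

lemma pow (hKs : ∀ x y, K x y = K y x) (hK : IsPosSemidefKernel K) (k : ℕ) :
    IsPosSemidefKernel fun x y => K x y ^ k := by
  induction k with
  | zero => simpa using isPosSemidefKernel_one
  | succ k ih =>
    simpa [pow_succ] using (ih.mul (fun x y => by rw [hKs]) hKs hK)

lemma exp (hKs : ∀ x y, K x y = K y x) (hK : IsPosSemidefKernel K) :
    IsPosSemidefKernel fun x y => Real.exp (K x y) := by
  intro n x c
  have hseries (i j : Fin n) : HasSum
      (fun k : ℕ => c i * c j * ((k.factorial : ℝ)⁻¹ * K (x i) (x j) ^ k))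
      (c i * c j * Real.exp (K (x i) (x j))) := by
    have h := NormedSpace.expSeries_div_hasSum_exp (K (x i) (x j))
    simp only [← Real.exp_eq_exp_ℝ, div_eq_inv_mul] at h
    exact h.mul_left _
  exact (hasSum_sum fun i _ => hasSum_sum fun j _ => hseries i j).nonneg fun k =>
    (hK.pow hKs k).const_mul (inv_nonneg.2 k.factorial.cast_nonneg) n x c

lemma isNegDefKernel_const_sub (hK : IsPosSemidefKernel K) (a : ℝ) :
    IsNegDefKernel fun x y => a - K x y := by
  intro n x c hc
  have hsum : ∑ i, ∑ j, c i * c j * (a - K (x i) (x j)) =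
      a * (∑ i, c i) * (∑ j, c j) - ∑ i, ∑ j, c i * c j * K (x i) (x j) := by
    simp only [mul_sub, Finset.sum_sub_distrib, Finset.mul_sum, Finset.sum_mul]
    congr 1
    exact Finset.sum_congr rfl fun i _ => Finset.sum_congr rfl fun j _ => by ring
  rw [hsum, hc]
  linarith [hK n x c]

end IsPosSemidefKernel

namespace IsNegDefKernel

variable {K : X → X → ℝ}

lemma const_mul (hK : IsNegDefKernel K) {t : ℝ} (ht : 0 ≤ t) :
    IsNegDefKernel fun x y => t * K x y := by
  intro n x c hc
  have hsum : ∑ i, ∑ j, c i * c j * (t * K (x i) (x j)) =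
      t * ∑ i, ∑ j, c i * c j * K (x i) (x j) := by
    simp only [Finset.mul_sum]
    exact Finset.sum_congr rfl fun i _ => Finset.sum_congr rfl fun j _ => by ring
  rw [hsum]
  exact mul_nonpos_of_nonneg_of_nonpos ht (hK n x c hc)

lemma isPosSemidefKernel_centered (hK : IsNegDefKernel K) (z : X) :
    IsPosSemidefKernel fun x y => K x z + K z y - K x y - K z z := by
  intro n x c
  have h := hK (n + 1) (Fin.cons z x) (Fin.cons (-∑ i, c i) c) (by simp [Fin.sum_univ_succ])
  simp only [Fin.sum_univ_succ, Fin.cons_zero, Fin.cons_succ, Finset.sum_add_distrib] at h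
  simp only [mul_right_comm _ (-∑ i, c i), mul_assoc (-∑ i, c i), ← Finset.sum_mul,
    ← Finset.mul_sum] at h
  have hexpand : ∑ i, ∑ j, c i * c j * (K (x i) z + K z (x j) - K (x i) (x j) - K z z) =
      (∑ i, c i * K (x i) z) * (∑ j, c j) + (∑ i, c i) * (∑ j, c j * K z (x j))
        - ∑ i, ∑ j, c i * c j * K (x i) (x j) - (∑ i, c i) * (∑ j, c j) * K z z := by
    rw [Finset.sum_mul_sum, Finset.sum_mul_sum, Finset.sum_mul_sum, Finset.sum_mul]
    simp only [Finset.sum_mul, ← Finset.sum_add_distrib, ← Finset.sum_sub_distrib]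
    exact Finset.sum_congr rfl fun i _ => Finset.sum_congr rfl fun j _ => by ring
  rw [hexpand]
  linarith

lemma isPosSemidefKernel_exp_neg_mul (hKs : ∀ x y, K x y = K y x) (hK : IsNegDefKernel K)
    {t : ℝ} (ht : 0 ≤ t) : IsPosSemidefKernel fun x y => Real.exp (-(t * K x y)) := by
  intro n x c
  rcases n with _ | n
  · simp
  set z := x 0
  have hcentered := ((hK.isPosSemidefKernel_centered z).const_mul ht).exp fun a b => by
    rw [hKs a z, hKs z b, hKs a b]; ring
  convert hcentered.mul_mul_same (fun a => Real.exp (t * (K z z / 2 - K a z))) (n + 1) x c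
    using 3 with i _ j _
  dsimp only
  rw [← Real.exp_add, ← Real.exp_add, hKs z (x j)]
  congr 2
  ring

lemma setIntegral_one_sub_exp_neg_mul (hKs : ∀ x y, K x y = K y x) (hK : IsNegDefKernel K)
    {w : ℝ → ℝ} (hw : ∀ u ∈ Ioi (0 : ℝ), 0 ≤ w u)
    (hint : ∀ x y, IntegrableOn (fun u => (1 - Real.exp (-(u * K x y))) * w u) (Ioi 0)) :
    IsNegDefKernel fun x y => ∫ u in Ioi 0, (1 - Real.exp (-(u * K x y))) * w u := by
  intro n x c hc
  have hswap : ∑ i, ∑ j, c i * c j * ∫ u in Ioi 0, (1 - Real.exp (-(u * K (x i) (x j)))) * w u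
      = ∫ u in Ioi 0, (∑ i, ∑ j, c i * c j * (1 - Real.exp (-(u * K (x i) (x j))))) * w u := by
    calc _ = ∑ i, ∑ j, ∫ u in Ioi 0,
            c i * c j * ((1 - Real.exp (-(u * K (x i) (x j)))) * w u) := by
          simp only [integral_const_mul]
      _ = ∫ u in Ioi 0, ∑ i, ∑ j,
            c i * c j * ((1 - Real.exp (-(u * K (x i) (x j)))) * w u) := by
          rw [integral_finsetSum _ fun i _ =>
            integrable_finsetSum _ fun j _ => (hint _ _).const_mul _]
          exact Finset.sum_congr rfl fun i _ =>
            (integral_finsetSum _ fun j _ => (hint _ _).const_mul _).symm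
      _ = _ := by simp only [Finset.sum_mul, mul_assoc]
  rw [hswap]
  exact setIntegral_nonpos measurableSet_Ioi fun u hu => mul_nonpos_of_nonpos_of_nonneg
    ((hK.isPosSemidefKernel_exp_neg_mul hKs (le_of_lt hu)).isNegDefKernel_const_sub 1 n x c hc)
    (hw u hu)

end IsNegDefKernel

end

section RpowIntegral

variable {H : ℝ}

lemma integrableOn_one_sub_exp_neg_mul_mul_rpow (hH0 : 0 < H) (hH1 : H < 1) {t : ℝ}
    (ht : 0 ≤ t) :
    IntegrableOn (fun u => (1 - Real.exp (-(u * t))) * u ^ (-1 - H)) (Ioi 0) := by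
  have hmeas : AEStronglyMeasurable (fun u : ℝ => (1 - Real.exp (-(u * t))) * u ^ (-1 - H)) :=
    (by fun_prop : Measurable _).aestronglyMeasurable
  have hbound (u : ℝ) (hu : 0 < u) (b : ℝ) (hb : 1 - Real.exp (-(u * t)) ≤ b) :
      ‖(1 - Real.exp (-(u * t))) * u ^ (-1 - H)‖ ≤ b * u ^ (-1 - H) := by
    have hexp : Real.exp (-(u * t)) ≤ 1 := Real.exp_le_one_iff.2 (by nlinarith)
    rw [Real.norm_of_nonneg (mul_nonneg (by linarith) (by positivity))]
    gcongr
  rw [← Ioc_union_Ioi_eq_Ioi zero_le_one]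
  refine IntegrableOn.union ?_ ?_
  · have hint : IntegrableOn (fun u : ℝ => t * u ^ (-H)) (Ioc 0 1) :=
      ((intervalIntegrable_iff_integrableOn_Ioc_of_le zero_le_one).1
        (intervalIntegral.intervalIntegrable_rpow' (r := -H) (by linarith))).const_mul t
    refine hint.mono' hmeas.restrict ((ae_restrict_iff' measurableSet_Ioc).2
      (Filter.Eventually.of_forall fun u hu => ?_))
    have hu : 0 < u := hu.1
    calc _ ≤ (u * t) * u ^ (-1 - H) :=
          hbound u hu _ (by linarith [Real.add_one_le_exp (-(u * t))])
      _ = t * u ^ (-H) := by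
        rw [mul_comm u t, mul_assoc, ← Real.rpow_one_add' hu.le (by linarith)]
        ring_nf
  · refine (integrableOn_Ioi_rpow_of_lt (a := -1 - H) (by linarith) zero_lt_one).mono'
      hmeas.restrict ((ae_restrict_iff' measurableSet_Ioi).2
        (Filter.Eventually.of_forall fun u hu => ?_))
    simpa using hbound u (zero_lt_one.trans hu) 1 (by linarith [Real.exp_pos (-(u * t))])

lemma setIntegral_one_sub_exp_neg_mul_mul_rpow (hH0 : 0 < H) {t : ℝ} (ht : 0 ≤ t) :
    ∫ u in Ioi 0, (1 - Real.exp (-(u * t))) * u ^ (-1 - H) =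
      t ^ H * ∫ u in Ioi 0, (1 - Real.exp (-u)) * u ^ (-1 - H) := by
  rcases ht.eq_or_lt with rfl | ht
  · simp [Real.zero_rpow hH0.ne']
  have hscale : ∀ u ∈ Ioi (0 : ℝ), (1 - Real.exp (-(u * t))) * u ^ (-1 - H) =
      t ^ (1 + H) * ((1 - Real.exp (-(t * u))) * (t * u) ^ (-1 - H)) := by
    intro u hu
    rw [Real.mul_rpow ht.le (le_of_lt hu), mul_comm t u]
    have : t ^ (1 + H) * t ^ (-1 - H) = 1 := by
      rw [← Real.rpow_add ht]; norm_num
    linear_combination (1 - Real.exp (-(u * t))) * u ^ (-1 - H) * this.symm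
  rw [setIntegral_congr_fun measurableSet_Ioi hscale, integral_const_mul,
    integral_comp_mul_left_Ioi (fun v => (1 - Real.exp (-v)) * v ^ (-1 - H)) 0 ht, mul_zero,
    smul_eq_mul, ← mul_assoc, Real.rpow_add ht, Real.rpow_one]
  field_simp

lemma setIntegral_one_sub_exp_neg_mul_rpow_pos (hH0 : 0 < H) (hH1 : H < 1) :
    0 < ∫ u in Ioi 0, (1 - Real.exp (-u)) * u ^ (-1 - H) := by
  have hpos : ∀ u ∈ Ioi (0 : ℝ), 0 < (1 - Real.exp (-u)) * u ^ (-1 - H) := fun u hu =>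
    mul_pos (by simpa using hu) (Real.rpow_pos_of_pos hu _)
  rw [setIntegral_pos_iff_support_of_nonneg_ae ((ae_restrict_iff' measurableSet_Ioi).2
      (Filter.Eventually.of_forall fun u hu => (hpos u hu).le))
    (by simpa using integrableOn_one_sub_exp_neg_mul_mul_rpow hH0 hH1 zero_le_one)]
  refine lt_of_lt_of_le ?_ (measure_mono fun u hu => ⟨(hpos u hu).ne', hu⟩)
  simp

end RpowIntegral

theorem rpow_negative_definite_general {X : Type*} (K : X → X → ℝ)
    (hsymm : ∀ x y, K x y = K y x)
    (hnonneg : ∀ x y, 0 ≤ K x y)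
    (hneg : ∀ (n : ℕ) (x : Fin n → X) (c : Fin n → ℝ), (∑ i, c i = 0) →
      ∑ i, ∑ j, c i * c j * K (x i) (x j) ≤ 0)
    (H : ℝ) (hH0 : 0 < H) (hH1 : H ≤ 1) :
    ∀ (n : ℕ) (x : Fin n → X) (c : Fin n → ℝ), (∑ i, c i = 0) →
      ∑ i, ∑ j, c i * c j * K (x i) (x j) ^ H ≤ 0 := by
  change IsNegDefKernel fun x y => K x y ^ H
  rcases hH1.lt_or_eq with hH1 | rfl
  · set C := ∫ u in Ioi 0, (1 - Real.exp (-u)) * u ^ (-1 - H)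
    have hC : 0 < C := setIntegral_one_sub_exp_neg_mul_rpow_pos hH0 hH1
    have hrep : (fun x y => K x y ^ H) = fun x y =>
        C⁻¹ * ∫ u in Ioi 0, (1 - Real.exp (-(u * K x y))) * u ^ (-1 - H) := by
      funext x y
      rw [setIntegral_one_sub_exp_neg_mul_mul_rpow hH0 (hnonneg x y), mul_comm (K x y ^ H),
        inv_mul_cancel_left₀ hC.ne']
    rw [hrep]
    exact (IsNegDefKernel.setIntegral_one_sub_exp_neg_mul hsymm hneg
      (fun u hu => Real.rpow_nonneg (le_of_lt hu) _)
      fun x y => integrableOn_one_sub_exp_neg_mul_mul_rpow hH0 hH1 (hnonneg x y)).const_mul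
      (inv_nonneg.2 hC.le)
  · simp only [Real.rpow_one]
    exact hneg

/-- Let `K : X × X → ℝ` be a symmetric negative definite kernel with `K(x,y) ≥ 0`
and `K(x,x) = 0`. Then for every `0 < H ≤ 1`, the function `(x,y) ↦ K(x,y)^H` is
also a negative definite kernel on `X`. -/
theorem rpow_negative_definite {X : Type*} (K : X → X → ℝ)
    (hsymm : ∀ x y, K x y = K y x)
    (hnonneg : ∀ x y, 0 ≤ K x y)
    (hdiag : ∀ x, K x x = 0)
    (hneg : ∀ (n : ℕ) (x : Fin n → X) (c : Fin n → ℝ), (∑ i, c i = 0) →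
      ∑ i, ∑ j, c i * c j * K (x i) (x j) ≤ 0)
    (H : ℝ) (hH0 : 0 < H) (hH1 : H ≤ 1) :
    ∀ (n : ℕ) (x : Fin n → X) (c : Fin n → ℝ), (∑ i, c i = 0) →
      ∑ i, ∑ j, c i * c j * K (x i) (x j) ^ H ≤ 0 :=
  rpow_negative_definite_general K hsymm hnonneg hneg H hH0 hH1
end

section
/- Let m₁, m₂ ∈ ℝ and σ₁, σ₂ ≥ 0, and let μ = N(m₁, σ₁²) and ν = N(m₂, σ₂²) be the Gaussian measures on ℝ with these means and variances. Then the squared Wasserstein distance satisfies W₂²(μ,ν) = (m₁ − m₂)² + (σ₁ − σ₂)². -/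
/-!
Write `X, Y` for the coordinates under a coupling `π` of `μ` and `ν`. The cost splits as
`E[(X - Y)²] = (E X - E Y)² + Var(X - Y)`, and `Var(X - Y) = Var X - 2 Cov(X, Y) + Var Y`.
The means and variances are fixed by the marginals, and Cauchy–Schwarz `Cov(X, Y) ≤ σ₁ σ₂`
gives the lower bound `(m₁ - m₂)² + (σ₁ - σ₂)²`. It is attained by the comonotone coupling
`(σ₁ Z + m₁, σ₂ Z + m₂)` with `Z` standard Gaussian, for which `X - Y = (σ₁ - σ₂) Z + m₁ - m₂`.
-/

open MeasureTheory ProbabilityTheory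
open scoped ENNReal NNReal

namespace ProbabilityTheory

variable {Ω : Type*} {mΩ : MeasurableSpace Ω} {μ : Measure Ω} {X Y : Ω → ℝ}

lemma sq_covariance_le_variance_mul_variance [IsFiniteMeasure μ] (hX : MemLp X 2 μ)
    (hY : MemLp Y 2 μ) : cov[X, Y; μ] ^ 2 ≤ Var[X; μ] * Var[Y; μ] := by
  have hquad : ∀ t : ℝ, 0 ≤ Var[X; μ] * (t * t) + 2 * cov[X, Y; μ] * t + Var[Y; μ] := by
    intro t
    have h := variance_add (hX.const_smul t) hY
    rw [variance_smul, covariance_smul_left] at h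
    nlinarith [variance_nonneg (t • X + Y) μ]
  have := discrim_le_zero hquad
  rw [discrim] at this
  nlinarith

lemma covariance_le_sqrt_variance_mul_sqrt_variance [IsFiniteMeasure μ] (hX : MemLp X 2 μ)
    (hY : MemLp Y 2 μ) : cov[X, Y; μ] ≤ √Var[X; μ] * √Var[Y; μ] := by
  rw [← Real.sqrt_mul (variance_nonneg X μ)]
  exact Real.le_sqrt_of_sq_le (sq_covariance_le_variance_mul_variance hX hY)

lemma sq_sqrt_variance_sub_sqrt_variance_le_variance_sub [IsFiniteMeasure μ] (hX : MemLp X 2 μ)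
    (hY : MemLp Y 2 μ) : (√Var[X; μ] - √Var[Y; μ]) ^ 2 ≤ Var[X - Y; μ] := by
  rw [variance_sub hX hY, sub_sq, Real.sq_sqrt (variance_nonneg X μ), Real.sq_sqrt (variance_nonneg Y μ)]
  linarith [covariance_le_sqrt_variance_mul_sqrt_variance hX hY]

lemma integral_sq_eq_sq_integral_add_variance [IsProbabilityMeasure μ] (hX : MemLp X 2 μ) :
    ∫ ω, X ω ^ 2 ∂μ = μ[X] ^ 2 + Var[X; μ] := by
  rw [variance_eq_sub hX]
  simp only [Pi.pow_apply]
  ring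

end ProbabilityTheory

namespace IsCoupling

variable {π : Measure (ℝ × ℝ)} {μ ν : Measure ℝ}

lemma memLp_fst (h : IsCoupling π μ ν) (hμ : MemLp id 2 μ) : MemLp Prod.fst 2 π := by
  rw [← h.2.1] at hμ
  exact (memLp_map_measure_iff aestronglyMeasurable_id measurable_fst.aemeasurable).1 hμ

lemma memLp_snd (h : IsCoupling π μ ν) (hν : MemLp id 2 ν) : MemLp Prod.snd 2 π := by
  rw [← h.2.2] at hν
  exact (memLp_map_measure_iff aestronglyMeasurable_id measurable_snd.aemeasurable).1 hν

lemma integral_fst (h : IsCoupling π μ ν) : ∫ p, p.1 ∂π = ∫ x, x ∂μ := by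
  rw [← h.2.1]
  exact (integral_map measurable_fst.aemeasurable aestronglyMeasurable_id).symm

lemma integral_snd (h : IsCoupling π μ ν) : ∫ p, p.2 ∂π = ∫ x, x ∂ν := by
  rw [← h.2.2]
  exact (integral_map measurable_snd.aemeasurable aestronglyMeasurable_id).symm

lemma variance_fst (h : IsCoupling π μ ν) : Var[Prod.fst; π] = Var[id; μ] := by
  rw [← h.2.1, variance_id_map measurable_fst.aemeasurable]

lemma variance_snd (h : IsCoupling π μ ν) : Var[Prod.snd; π] = Var[id; ν] := by
  rw [← h.2.2, variance_id_map measurable_snd.aemeasurable]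

lemma lintegral_cost_eq (h : IsCoupling π μ ν) (hμ : MemLp id 2 μ) (hν : MemLp id 2 ν) :
    ∫⁻ p, ENNReal.ofReal ((p.1 - p.2) ^ 2) ∂π =
      ENNReal.ofReal ((∫ x, x ∂μ - ∫ x, x ∂ν) ^ 2 + Var[fun p => p.1 - p.2; π]) := by
  have := h.1
  have hL2 : MemLp (fun p : ℝ × ℝ => p.1 - p.2) 2 π := (h.memLp_fst hμ).sub (h.memLp_snd hν)
  rw [← ofReal_integral_eq_lintegral_ofReal hL2.integrable_sq
      (ae_of_all _ fun p => sq_nonneg _),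
    integral_sq_eq_sq_integral_add_variance hL2,
    integral_sub ((h.memLp_fst hμ).integrable one_le_two) ((h.memLp_snd hν).integrable one_le_two),
    h.integral_fst, h.integral_snd]

end IsCoupling

lemma W2sq_le_lintegral_cost {π : Measure (ℝ × ℝ)} {μ ν : Measure ℝ} (h : IsCoupling π μ ν) :
    W2sq μ ν ≤ ∫⁻ p, ENNReal.ofReal ((p.1 - p.2) ^ 2) ∂π :=
  sInf_le ⟨π, h, rfl⟩

lemma le_W2sq_of_memLp {μ ν : Measure ℝ} (hμ : MemLp id 2 μ) (hν : MemLp id 2 ν) :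
    ENNReal.ofReal ((∫ x, x ∂μ - ∫ x, x ∂ν) ^ 2 + (√Var[id; μ] - √Var[id; ν]) ^ 2) ≤
      W2sq μ ν := by
  refine le_sInf ?_
  rintro _ ⟨π, h, rfl⟩
  have := h.1
  rw [h.lintegral_cost_eq hμ hν, ← h.variance_fst, ← h.variance_snd]
  gcongr
  exact sq_sqrt_variance_sub_sqrt_variance_le_variance_sub (h.memLp_fst hμ) (h.memLp_snd hν)

lemma gaussianReal_map_const_mul_add (m : ℝ) (σ : ℝ≥0) :
    (gaussianReal 0 1).map (fun z => σ * z + m) = gaussianReal m (σ ^ 2) := by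
  have hcomp : (fun z : ℝ => σ * z + m) = (· + m) ∘ ((σ : ℝ) * ·) := rfl
  rw [hcomp, ← Measure.map_map (measurable_add_const m) (measurable_const_mul _),
    gaussianReal_map_const_mul, gaussianReal_map_add_const, mul_zero, zero_add, mul_one]
  congr

noncomputable def gaussianComonotoneCoupling (m₁ m₂ : ℝ) (σ₁ σ₂ : ℝ≥0) : Measure (ℝ × ℝ) :=
  (gaussianReal 0 1).map fun z => (σ₁ * z + m₁, σ₂ * z + m₂)

lemma isCoupling_gaussianComonotoneCoupling (m₁ m₂ : ℝ) (σ₁ σ₂ : ℝ≥0) :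
    IsCoupling (gaussianComonotoneCoupling m₁ m₂ σ₁ σ₂)
      (gaussianReal m₁ (σ₁ ^ 2)) (gaussianReal m₂ (σ₂ ^ 2)) := by
  have hT : Measurable fun z : ℝ => ((σ₁ : ℝ) * z + m₁, (σ₂ : ℝ) * z + m₂) := by fun_prop
  refine ⟨Measure.isProbabilityMeasure_map hT.aemeasurable, ?_, ?_⟩
  · rw [gaussianComonotoneCoupling, Measure.map_map measurable_fst hT]
    exact gaussianReal_map_const_mul_add m₁ σ₁
  · rw [gaussianComonotoneCoupling, Measure.map_map measurable_snd hT]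
    exact gaussianReal_map_const_mul_add m₂ σ₂

lemma variance_sub_gaussianComonotoneCoupling (m₁ m₂ : ℝ) (σ₁ σ₂ : ℝ≥0) :
    Var[fun p => p.1 - p.2; gaussianComonotoneCoupling m₁ m₂ σ₁ σ₂] = ((σ₁ : ℝ) - σ₂) ^ 2 := by
  rw [gaussianComonotoneCoupling, variance_map (by fun_prop) (by fun_prop)]
  calc Var[fun z => ((σ₁ : ℝ) * z + m₁) - (σ₂ * z + m₂); gaussianReal 0 1]
      = Var[fun z => ((σ₁ : ℝ) - σ₂) * z + (m₁ - m₂); gaussianReal 0 1] := by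
        congr 1 with z; ring
    _ = ((σ₁ : ℝ) - σ₂) ^ 2 := by
        rw [variance_add_const (by fun_prop), variance_const_mul, variance_fun_id_gaussianReal]
        simp

/-- For Gaussian measures `N(m₁, σ₁²)` and `N(m₂, σ₂²)` on `ℝ` (with `σᵢ ≥ 0`,
the Dirac mass at `mᵢ` when `σᵢ = 0`), the squared Wasserstein distance is
`W₂²(μ,ν) = (m₁ - m₂)² + (σ₁ - σ₂)²`. -/
theorem W2sq_gaussian (m₁ m₂ : ℝ) (σ₁ σ₂ : ℝ≥0) :
    W2sq (gaussianReal m₁ (σ₁ ^ 2)) (gaussianReal m₂ (σ₂ ^ 2)) =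
      ENNReal.ofReal ((m₁ - m₂) ^ 2 + ((σ₁ : ℝ) - (σ₂ : ℝ)) ^ 2) := by
  have hμ : MemLp id 2 (gaussianReal m₁ (σ₁ ^ 2)) := memLp_id_gaussianReal' 2 (by simp)
  have hν : MemLp id 2 (gaussianReal m₂ (σ₂ ^ 2)) := memLp_id_gaussianReal' 2 (by simp)
  apply le_antisymm
  · have hπ := isCoupling_gaussianComonotoneCoupling m₁ m₂ σ₁ σ₂
    calc W2sq _ _
        ≤ ∫⁻ p, ENNReal.ofReal ((p.1 - p.2) ^ 2) ∂gaussianComonotoneCoupling m₁ m₂ σ₁ σ₂ :=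
          W2sq_le_lintegral_cost hπ
      _ = _ := by
        rw [hπ.lintegral_cost_eq hμ hν, variance_sub_gaussianComonotoneCoupling,
          integral_id_gaussianReal, integral_id_gaussianReal]
  · simpa using le_W2sq_of_memLp hμ hν
end

section
/- Let X be a compact metric space and let k : X × X → ℝ be a continuous symmetric kernel that is universal, i.e. the linear span of {k(·,x) : x ∈ X} is dense in C(X) with the supremum norm. If μ and ν are Borel probability measures on X such that ∫ k(y,x) dμ(x) = ∫ k(y,x) dν(x) for every y ∈ X, then μ = ν (every universal kernel is characteristic). -/
/-!
Integration against a finite measure is a continuous linear functional on `C(X, ℝ)`, so two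
measures whose integrals agree on the kernel sections `k(·, x)` (which, by symmetry, is the
hypothesis) agree on their dense span and hence on all of `C(X, ℝ)`; on a compact metric space
continuous functions determine a finite Borel measure.
-/

open MeasureTheory

namespace ContinuousMap

variable {X : Type*} [TopologicalSpace X] [CompactSpace X] [MeasurableSpace X] [BorelSpace X]

noncomputable def integralCLM (μ : Measure X) [IsFiniteMeasure μ] : C(X, ℝ) →L[ℝ] ℝ :=
  L1.integralCLM ∘L toLp 1 μ ℝ

theorem integralCLM_apply (μ : Measure X) [IsFiniteMeasure μ] (f : C(X, ℝ)) :
    integralCLM μ f = ∫ x, f x ∂μ := by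
  rw [integralCLM, ContinuousLinearMap.comp_apply, ← L1.integral_eq, L1.integral_eq_integral]
  exact integral_congr_ae (coeFn_toLp μ f)

end ContinuousMap

theorem MeasureTheory.ext_of_forall_mem_span_integral_eq {X : Type*} [TopologicalSpace X]
    [CompactSpace X] [HasOuterApproxClosed X] [MeasurableSpace X] [BorelSpace X]
    {μ ν : Measure X} [IsFiniteMeasure μ] [IsFiniteMeasure ν] {s : Set C(X, ℝ)}
    (hs : Dense (Submodule.span ℝ s : Set C(X, ℝ)))
    (h : ∀ g ∈ s, ∫ x, g x ∂μ = ∫ x, g x ∂ν) : μ = ν := by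
  have hCLM : ContinuousMap.integralCLM μ = ContinuousMap.integralCLM ν :=
    ContinuousLinearMap.ext_on hs fun g hg => by
      simpa only [ContinuousMap.integralCLM_apply] using h g hg
  refine ext_of_forall_integral_eq_of_IsFiniteMeasure fun f => ?_
  have hf := congr($hCLM f.toContinuousMap)
  rwa [ContinuousMap.integralCLM_apply, ContinuousMap.integralCLM_apply] at hf

theorem universal_kernel_is_characteristic_general {X : Type*} [MetricSpace X]
    [CompactSpace X] [MeasurableSpace X] [BorelSpace X]
    (k : X → X → ℝ)
    (hsymm : ∀ x y, k x y = k y x)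
    (huniv : Dense (↑(Submodule.span ℝ
        {g : C(X, ℝ) | ∃ x : X, ∀ y : X, g y = k y x}) : Set C(X, ℝ)))
    (μ ν : Measure X) [IsProbabilityMeasure μ] [IsProbabilityMeasure ν]
    (h : ∀ y : X, ∫ x, k y x ∂μ = ∫ x, k y x ∂ν) : μ = ν := by
  refine ext_of_forall_mem_span_integral_eq huniv ?_
  rintro g ⟨x, hg⟩
  simpa only [hg, hsymm _ x] using h x

/-- Let `X` be a compact metric space and `k : X × X → ℝ` a continuous symmetric
kernel that is universal, i.e. the linear span of `{k(·,x) : x ∈ X}` is dense in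
`C(X, ℝ)` with the supremum norm. If `μ` and `ν` are Borel probability measures on
`X` with `∫ k(y,x) dμ(x) = ∫ k(y,x) dν(x)` for every `y`, then `μ = ν`: every
universal kernel is characteristic. -/
theorem universal_kernel_is_characteristic {X : Type*} [MetricSpace X]
    [CompactSpace X] [MeasurableSpace X] [BorelSpace X]
    (k : X → X → ℝ) (hcont : Continuous fun p : X × X => k p.1 p.2)
    (hsymm : ∀ x y, k x y = k y x)
    (huniv : Dense (↑(Submodule.span ℝ
        {g : C(X, ℝ) | ∃ x : X, ∀ y : X, g y = k y x}) : Set C(X, ℝ)))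
    (μ ν : Measure X) [IsProbabilityMeasure μ] [IsProbabilityMeasure ν]
    (h : ∀ y : X, ∫ x, k y x ∂μ = ∫ x, k y x ∂ν) : μ = ν :=
  universal_kernel_is_characteristic_general k hsymm huniv μ ν h
end
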